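/- Let S be a Noetherian scheme with an action of a finite group G, X a separated finite-type S-scheme with a good G-action, and C ⊆ X a constructible subset closed under the G-action. Then C determines a well-defined class [C] in K₀^G(Var_S); more precisely, C can be written as a finite disjoint union of G-invariant locally closed subschemes of X. -/

import Mathlib

open Set TopologicalSpace

/-- Key combinatorial lemma: given finitely many sets `U i` that are each open in their
closure (witnessed by open sets `O i`), any open set meeting `⋃ U i` contains a point of
`⋃ U i` avoiding all the "boundaries" `closure (U j) \ O j` for `j` in a finite set. -/
private lemma claim1 {X : Type} [TopologicalSpace X] {n : ℕ} (U O : Fin n → Set X)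
    (hO : ∀ i, IsOpen (O i)) (hUO : ∀ i, U i = closure (U i) ∩ O i)
    (s : Finset (Fin n)) :
    ∀ N : Set X, IsOpen N → (N ∩ ⋃ i, U i).Nonempty →
      ∃ z ∈ N ∩ ⋃ i, U i, ∀ j ∈ s, z ∉ closure (U j) \ O j := by
  classical
  induction s using Finset.induction_on with
  | empty =>
    intro N _ hne
    obtain ⟨z, hz⟩ := hne
    exact ⟨z, hz, by simp⟩
  | @insert j s hj IH =>
    intro N hN hne
    obtain ⟨z, hzN, hzs⟩ := IH N hN hne
    by_cases hzj : z ∈ closure (U j) \ O j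
    · have hNU : (N ∩ U j).Nonempty := mem_closure_iff.mp hzj.1 N hN hzN.1
      have hNO : ((N ∩ O j) ∩ ⋃ i, U i).Nonempty := by
        obtain ⟨y, hyN, hyU⟩ := hNU
        exact ⟨y, ⟨hyN, ((hUO j) ▸ hyU).2⟩, mem_iUnion.mpr ⟨j, hyU⟩⟩
      obtain ⟨z', hz'N, hz's⟩ := IH (N ∩ O j) (hN.inter (hO j)) hNO
      refine ⟨z', ⟨hz'N.1.1, hz'N.2⟩, ?_⟩
      intro k hk
      rcases Finset.mem_insert.mp hk with rfl | hk
      · exact fun h => h.2 hz'N.1.2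
      · exact hz's k hk
    · refine ⟨z, hzN, ?_⟩
      intro k hk
      rcases Finset.mem_insert.mp hk with rfl | hk
      · exact hzj
      · exact hzs k hk

/-- A finite intersection of relatively dense open subsets of `Z` is relatively dense. -/
private lemma claim2 {X ι : Type} [TopologicalSpace X] {Z : Set X} (O : ι → Set X)
    (hO : ∀ i, IsOpen (O i)) (hd : ∀ i, Z ⊆ closure (Z ∩ O i)) :
    ∀ s : Finset ι, Z ⊆ closure (Z ∩ ⋂ i ∈ s, O i) := by
  classical
  intro s
  induction s using Finset.induction_on with
  | empty => simpa using subset_closure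
  | @insert j s hj IH =>
    intro x hx
    rw [mem_closure_iff]
    intro N hN hxN
    obtain ⟨y, hyN, hyZ, hyO⟩ := mem_closure_iff.mp (hd j hx) N hN hxN
    obtain ⟨w, ⟨hwN, hwO⟩, hwZ, hwint⟩ :=
      mem_closure_iff.mp (IH hyZ) (N ∩ O j) (hN.inter (hO j)) ⟨hyN, hyO⟩
    refine ⟨w, hwN, hwZ, ?_⟩
    rw [Finset.set_biInter_insert]
    exact ⟨hwO, hwint⟩

private lemma stmt9_aux (G X : Type) [Group G] [Finite G]
    [TopologicalSpace X] [TopologicalSpace.NoetherianSpace X]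
    (ρ : G → X ≃ₜ X)
    (hρ_one : ρ 1 = Homeomorph.refl X)
    (hρ_mul : ∀ (g g' : G) (x : X), ρ (g * g') x = ρ g (ρ g' x)) :
    ∀ Z : Closeds X, ∀ C : Set X, C ⊆ (Z : Set X) →
      (∃ (n : ℕ) (U : Fin n → Set X), (∀ i, IsLocallyClosed (U i)) ∧ C = ⋃ i, U i) →
      (∀ g : G, (ρ g) '' C = C) →
      ∃ (n : ℕ) (U : Fin n → Set X),
        (∀ i, IsLocallyClosed (U i)) ∧
        (∀ i, ∀ g : G, (ρ g) '' (U i) = U i) ∧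
        (Pairwise (Function.onFun Disjoint U)) ∧
        C = ⋃ i, U i := by
  classical
  intro Z
  induction Z using WellFoundedLT.induction with
  | _ Z IH =>
  intro C hCZ hCcon hCinv
  rcases C.eq_empty_or_nonempty with rfl | hCne
  · exact ⟨0, finZeroElim, fun i => i.elim0, fun i => i.elim0,
      fun i => i.elim0, by simp⟩
  obtain ⟨n, U, hUlc, hCU⟩ := hCcon
  -- choose open witnesses for the locally closed pieces
  have hOex : ∀ i, ∃ O : Set X, IsOpen O ∧ U i = closure (U i) ∩ O := by
    intro i
    obtain ⟨O, K, hOo, hKc, hUi⟩ := hUlc i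
    refine ⟨O, hOo, subset_antisymm (subset_inter subset_closure (hUi ▸ inter_subset_left)) ?_⟩
    intro x hx
    have hclK : closure (U i) ⊆ K := closure_minimal (hUi ▸ inter_subset_right) hKc
    rw [hUi]
    exact ⟨hx.2, hclK hx.1⟩
  choose O hOo hUO using hOex
  set Z₀ : Set X := closure C with hZ₀def
  have hCZ₀ : C ⊆ Z₀ := subset_closure
  have hZ₀inv : ∀ g : G, ρ g '' Z₀ = Z₀ := by
    intro g
    rw [hZ₀def, (ρ g).image_closure, hCinv g]
  set F : Set X := ⋃ i, closure (U i) \ O i with hFdef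
  have hFc : IsClosed F :=
    isClosed_iUnion_of_finite fun i => isClosed_closure.inter (hOo i).isClosed_compl
  set V : Set X := Z₀ \ F with hVdef
  have hVC : V ⊆ C := by
    intro x hx
    have hx1 : x ∈ ⋃ i, closure (U i) := by
      refine closure_minimal ?_ (isClosed_iUnion_of_finite fun i => isClosed_closure) hx.1
      rw [hCU]
      exact iUnion_mono fun i => subset_closure
    obtain ⟨i, hxi⟩ := mem_iUnion.mp hx1
    have hxO : x ∈ O i := by
      by_contra hxO
      exact hx.2 (mem_iUnion.mpr ⟨i, hxi, hxO⟩)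
    rw [hCU]
    exact mem_iUnion.mpr ⟨i, (hUO i) ▸ ⟨hxi, hxO⟩⟩
  have hVdense : Z₀ ⊆ closure V := by
    intro x hx
    rw [mem_closure_iff]
    intro N hN hxN
    have hNC : (N ∩ C).Nonempty := mem_closure_iff.mp hx N hN hxN
    have hNC' : (N ∩ ⋃ i, U i).Nonempty := by rwa [← hCU]
    obtain ⟨z, hzN, hzF⟩ := claim1 U O hOo hUO Finset.univ N hN hNC'
    refine ⟨z, hzN.1, hCZ₀ (show z ∈ C by rw [hCU]; exact hzN.2), ?_⟩
    intro hzF'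
    obtain ⟨i, hzi⟩ := mem_iUnion.mp hzF'
    exact hzF i (Finset.mem_univ i) hzi
  -- the invariant open piece
  set Og : G → Set X := fun g => (ρ g '' F)ᶜ with hOgdef
  have hOgo : ∀ g, IsOpen (Og g) := fun g => (((ρ g).isClosed_image).mpr hFc).isOpen_compl
  have hkey : ∀ g : G, ρ g '' V = Z₀ ∩ Og g := by
    intro g
    rw [hVdef, Set.image_diff (ρ g).injective, hZ₀inv g, diff_eq]
  have hd : ∀ g : G, Z₀ ⊆ closure (Z₀ ∩ Og g) := by
    intro g
    rw [← hkey g]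
    calc Z₀ = ρ g '' Z₀ := (hZ₀inv g).symm
    _ ⊆ ρ g '' closure V := image_mono hVdense
    _ = closure (ρ g '' V) := (ρ g).image_closure V
  have : Nonempty G := ⟨1⟩
  have := Fintype.ofFinite G
  set OW : Set X := ⋂ g, Og g with hOWdef
  have hOWo : IsOpen OW := isOpen_iInter_of_finite hOgo
  set W : Set X := Z₀ ∩ OW with hWdef
  have hWV : W = ⋂ g, ρ g '' V := by
    rw [hWdef, hOWdef, inter_iInter]
    exact iInter_congr fun g => (hkey g).symm
  have hWC : W ⊆ C := by
    have h1 : W ⊆ ρ 1 '' V := hWV ▸ iInter_subset _ 1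
    intro x hx
    obtain ⟨y, hyV, hyx⟩ := h1 hx
    have hy : (ρ 1) y = y := by rw [hρ_one]; rfl
    rw [← hyx, hy]
    exact hVC hyV
  have hWlc : IsLocallyClosed W := ⟨OW, Z₀, hOWo, isClosed_closure, inter_comm _ _⟩
  have hWne : W.Nonempty := by
    obtain ⟨x, hx⟩ := hCne
    have hx0 : x ∈ Z₀ := hCZ₀ hx
    have h2 := claim2 Og hOgo hd Finset.univ hx0
    have h3 : (⋂ g ∈ (Finset.univ : Finset G), Og g) = OW := by
      rw [hOWdef]; simp
    rw [h3] at h2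
    exact closure_nonempty_iff.mp ⟨x, h2⟩
  have hWinv : ∀ g : G, ρ g '' W = W := by
    intro h
    rw [hWV, Set.image_iInter (ρ h).bijective]
    have h1 : ∀ g : G, ρ h '' (ρ g '' V) = ρ (h * g) '' V := by
      intro g
      rw [← image_comp]
      apply congrFun
      apply congrArg
      funext x
      exact (hρ_mul h g x).symm
    ext x
    simp only [mem_iInter]
    constructor
    · intro H k
      have := H (h⁻¹ * k)
      rwa [h1, mul_inv_cancel_left] at this
    · intro H g
      rw [h1]
      exact H (h * g)
  -- the complement
  set C' : Set X := C \ W with hC'def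
  have hC'U : C' = ⋃ i, (U i ∩ OWᶜ) := by
    ext x
    simp only [hC'def, mem_diff, hCU, mem_iUnion, mem_inter_iff, mem_compl_iff]
    constructor
    · rintro ⟨⟨i, hxi⟩, hxW⟩
      refine ⟨i, hxi, fun hxOW => hxW ⟨hCZ₀ (hCU ▸ mem_iUnion.mpr ⟨i, hxi⟩), hxOW⟩⟩
    · rintro ⟨i, hxi, hxOW⟩
      exact ⟨⟨i, hxi⟩, fun hxW => hxOW hxW.2⟩
  have hC'con : ∃ (m : ℕ) (U' : Fin m → Set X), (∀ i, IsLocallyClosed (U' i)) ∧ C' = ⋃ i, U' i :=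
    ⟨n, fun i => U i ∩ OWᶜ,
      fun i => (hUlc i).inter ⟨univ, OWᶜ, isOpen_univ, hOWo.isClosed_compl,
        (univ_inter _).symm⟩, hC'U⟩
  have hC'inv : ∀ g : G, ρ g '' C' = C' := by
    intro g
    rw [hC'def, Set.image_diff (ρ g).injective, hCinv g, hWinv g]
  -- the smaller closed set
  set Z' : Closeds X := ⟨Z₀ ∩ OWᶜ, isClosed_closure.inter hOWo.isClosed_compl⟩ with hZ'def
  have hC'Z' : C' ⊆ (Z' : Set X) := by
    rintro x ⟨hxC, hxW⟩
    exact ⟨hCZ₀ hxC, fun hxOW => hxW ⟨hCZ₀ hxC, hxOW⟩⟩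
  have hZ'lt : Z' < Z := by
    have hZ'le : Z' ≤ Z := by
      intro x hx
      exact closure_minimal hCZ Z.isClosed' hx.1
    refine lt_of_le_of_ne hZ'le ?_
    intro hEq
    obtain ⟨w, hw⟩ := hWne
    have hwZ : w ∈ (Z : Set X) := hCZ (hWC hw)
    rw [← hEq] at hwZ
    exact hwZ.2 hw.2
  obtain ⟨m, U', h1, h2, h3, h4⟩ := IH Z' hZ'lt C' hC'Z' hC'con hC'inv
  refine ⟨m + 1, Fin.cons W U', ?_, ?_, ?_, ?_⟩
  · intro i
    induction i using Fin.cases with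
    | zero => simpa using hWlc
    | succ i => simpa using h1 i
  · intro i
    induction i using Fin.cases with
    | zero => simpa using hWinv
    | succ i => simpa using h2 i
  · have hdisj : ∀ j : Fin m, Disjoint W (U' j) := by
      intro j
      rw [Set.disjoint_left]
      intro a haW haU
      have : a ∈ C' := h4 ▸ mem_iUnion.mpr ⟨j, haU⟩
      exact this.2 haW
    intro i j hij
    induction i using Fin.cases with
    | zero =>
      induction j using Fin.cases with
      | zero => exact absurd rfl hij
      | succ j => simpa [Function.onFun] using hdisj j
    | succ i =>
      induction j using Fin.cases with
      | zero => simpa [Function.onFun] using (hdisj i).symm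
      | succ j =>
        have hne : i ≠ j := fun h => hij (by rw [h])
        simpa [Function.onFun] using h3 hne
  · have hunion : ⋃ i, (Fin.cons W U' : Fin (m + 1) → Set X) i = W ∪ ⋃ i, U' i := by
      ext x
      simp only [mem_iUnion, Set.mem_union, Fin.exists_fin_succ, Fin.cons_zero, Fin.cons_succ]
    rw [hunion, ← h4, hC'def, Set.union_diff_cancel hWC]

/-- let `X` be a Noetherian (topological space of a) separated finite type
`S`-scheme with a good action of a finite group `G` (acting by homeomorphisms
`ρ g : X ≃ₜ X` forming a group action), and let `C ⊆ X` be a constructible subset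
(a finite union of locally closed subsets) closed under the `G`-action.  Then `C` is a
finite disjoint union of `G`-invariant locally closed subsets; in particular `C`
determines a well-defined class `[C]` in `K₀^G(Var_S)`. -/
theorem stmt_9 (G X : Type) [Group G] [Finite G]
    [TopologicalSpace X] [TopologicalSpace.NoetherianSpace X]
    (ρ : G → X ≃ₜ X)
    (hρ_one : ρ 1 = Homeomorph.refl X)
    (hρ_mul : ∀ (g g' : G) (x : X), ρ (g * g') x = ρ g (ρ g' x))
    (C : Set X)
    (hC : ∃ (n : ℕ) (U : Fin n → Set X), (∀ i, IsLocallyClosed (U i)) ∧ C = ⋃ i, U i)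
    (hinv : ∀ g : G, (ρ g) '' C = C) :
    ∃ (n : ℕ) (U : Fin n → Set X),
      (∀ i, IsLocallyClosed (U i)) ∧
      (∀ i, ∀ g : G, (ρ g) '' (U i) = U i) ∧
      (Pairwise (Function.onFun Disjoint U)) ∧
      C = ⋃ i, U i :=
  stmt9_aux G X ρ hρ_one hρ_mul ⊤ C (by simp) hC hinv
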